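/- For each cyclic permutation (i,j,k) of (1,2,3) and all signs ε, δ ∈ {+1,−1}: (K+1)(X_i · I_{ij}^ε P_k^δ) = 2 X_i I_{ij}^ε P_k^δ; that is, X_i I_{ij}^ε P_k^δ is a proper function of K+1 with proper value 2. -/

import Mathlib

open scoped TensorProduct

noncomputable section

/-- The standard positive-definite quadratic form on `ℝ³`. -/
abbrev Q3 : QuadraticForm ℝ (Fin 3 → ℝ) :=
  QuadraticMap.weightedSumSquares ℝ (fun _ : Fin 3 => (1 : ℝ))

/-- The Clifford algebra of 3-dimensional Euclidean space. -/
abbrev Cl3 : Type := CliffordAlgebra Q3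

/-- The tensor product of two copies of `Cl3`, as ℝ-algebras. -/
abbrev A3 : Type := Cl3 ⊗[ℝ] Cl3

/-- The generators `e₁, e₂, e₃` (indexed by `Fin 3`). -/
def e (l : Fin 3) : Cl3 := CliffordAlgebra.ι Q3 (Pi.single l 1)

/-- `X_l := e_l ⊗ e_l`. -/
def X (l : Fin 3) : A3 := e l ⊗ₜ[ℝ] e l

/-- `w^i := (e_j e_k) ⊗ 1` for `(i,j,k)` a cyclic permutation of the indices. -/
def w (i : Fin 3) : A3 := (e (i + 1) * e (i + 2)) ⊗ₜ[ℝ] (1 : Cl3)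

/-- The (ℝ-linear) operators `J_l(U) := (1/2)(w^l U − U w^l)`. -/
def J (l : Fin 3) (U : A3) : A3 := (1/2 : ℝ) • (w l * U - U * w l)

/-- Kähler's total angular momentum operator `K+1`. -/
def K1 (U : A3) : A3 := J 0 U * w 0 + J 1 U * w 1 + J 2 U * w 2

/-- The idempotents `I_{ij}^ε := (1/2)(1 + ε X_i X_j)`. -/
def Iem (i j : Fin 3) (ε : ℝ) : A3 := (1/2 : ℝ) • ((1 : A3) + ε • (X i * X j))

/-- The idempotents `P_l^δ := (1/2)(1 + δ X_l)`. -/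
def P (l : Fin 3) (δ : ℝ) : A3 := (1/2 : ℝ) • ((1 : A3) + δ • X l)

/-! Since `(w^l)² = -1`, an element `U` with `w^l U = s_l U w^l` for every `l` satisfies
`(K+1) U = ((3 - s₁ - s₂ - s₃) / 2) U`. Each `w^l` commutes with `X_l` and anticommutes with the
other two `X_m`, so the sign sum is `-1`, and the eigenvalue `2`, for every `X_m` and every `X_a X_b`
with `a ≠ b`. Because `X_i² = 1`, the element `X_i I_{ij}^ε P_k^δ` expands as
`(X_i + ε X_j + δ X_i X_k + εδ X_j X_k) / 4`, a combination of such monomials. -/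

section AntiCommuting

variable {R : Type*} [Semigroup R] [HasDistribNeg R] {a b c : R}

theorem commute_mul_of_anticommute (hac : a * c = -(c * a)) (hbc : b * c = -(c * b)) :
    Commute (a * b) c := by
  rw [Commute, SemiconjBy, mul_assoc, hbc, mul_neg, ← mul_assoc, hac, neg_mul, neg_neg, mul_assoc]

theorem mul_mul_self_left_of_anticommute (h : a * b = -(b * a)) :
    a * b * a = -(a * (a * b)) := by
  rw [mul_assoc, ← neg_eq_iff_eq_neg.mpr h, mul_neg]

theorem mul_mul_self_right_of_anticommute (h : a * b = -(b * a)) :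
    a * b * b = -(b * (a * b)) := by
  rw [← mul_assoc, h, neg_mul]

end AntiCommuting

lemma e_mul_self (l : Fin 3) : e l * e l = 1 := by
  rw [e, CliffordAlgebra.ι_sq_scalar]
  simp [QuadraticMap.weightedSumSquares_apply, Pi.single_apply]

lemma e_anticommute {l m : Fin 3} (h : l ≠ m) : e l * e m = -(e m * e l) := by
  refine CliffordAlgebra.ι_mul_ι_comm_of_isOrtho (QuadraticMap.isOrtho_def.mpr ?_)
  revert h
  fin_cases l <;> fin_cases m <;> simp [QuadraticMap.weightedSumSquares_apply, Fin.sum_univ_three]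

lemma bivector_mul_self (l : Fin 3) : e (l + 1) * e (l + 2) * (e (l + 1) * e (l + 2)) = -1 := by
  rw [← mul_assoc, mul_mul_self_left_of_anticommute (e_anticommute (by revert l; decide)),
    neg_mul, ← mul_assoc, e_mul_self, one_mul, e_mul_self]

lemma w_mul_self (l : Fin 3) : w l * w l = -1 := by
  rw [w, Algebra.TensorProduct.tmul_mul_tmul, bivector_mul_self, mul_one, TensorProduct.neg_tmul,
    Algebra.TensorProduct.one_def]

def commSign (l m : Fin 3) : ℝ := if l = m then 1 else -1

lemma bivector_mul_e (l m : Fin 3) :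
    e (l + 1) * e (l + 2) * e m = commSign l m • (e m * (e (l + 1) * e (l + 2))) := by
  by_cases hlm : l = m
  · subst hlm
    rw [commSign, if_pos rfl, one_smul]
    exact commute_mul_of_anticommute (e_anticommute (by revert l; decide))
      (e_anticommute (by revert l; decide))
  · rw [commSign, if_neg hlm, neg_one_smul]
    obtain rfl | rfl : m = l + 1 ∨ m = l + 2 := by revert l m; decide
    · exact mul_mul_self_left_of_anticommute (e_anticommute (by revert l; decide))
    · exact mul_mul_self_right_of_anticommute (e_anticommute (by revert l; decide))

lemma w_mul_X (l m : Fin 3) : w l * X m = commSign l m • (X m * w l) := by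
  rw [w, X, Algebra.TensorProduct.tmul_mul_tmul, Algebra.TensorProduct.tmul_mul_tmul,
    bivector_mul_e, one_mul, mul_one, TensorProduct.smul_tmul']

lemma X_mul_self (l : Fin 3) : X l * X l = 1 := by
  rw [X, Algebra.TensorProduct.tmul_mul_tmul, e_mul_self, Algebra.TensorProduct.one_def]

lemma w_mul_X_mul_X (l a b : Fin 3) :
    w l * (X a * X b) = (commSign l a * commSign l b) • (X a * X b * w l) := by
  rw [← mul_assoc, w_mul_X, smul_mul_assoc, mul_assoc, w_mul_X, mul_smul_comm, smul_smul,
    ← mul_assoc]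

lemma J_mul_w_of_mul_eq_smul {l : Fin 3} {U : A3} {s : ℝ} (h : w l * U = s • (U * w l)) :
    J l U * w l = ((1 - s) / 2) • U := by
  rw [J, smul_mul_assoc, sub_mul, h, smul_mul_assoc, mul_assoc, w_mul_self, mul_neg, mul_one]
  module

lemma K1_eq_smul_of_mul_eq_smul {U : A3} (s : Fin 3 → ℝ) (h : ∀ l, w l * U = s l • (U * w l)) :
    K1 U = ((3 - (s 0 + s 1 + s 2)) / 2) • U := by
  rw [K1, J_mul_w_of_mul_eq_smul (h 0), J_mul_w_of_mul_eq_smul (h 1),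
    J_mul_w_of_mul_eq_smul (h 2)]
  module

def K1ₗ : Module.End ℝ A3 where
  toFun := K1
  map_add' U V := by
    simp only [K1, J, mul_add, add_mul, sub_mul, smul_mul_assoc]
    module
  map_smul' c U := by
    simp only [K1, J, mul_smul_comm, smul_mul_assoc, sub_mul, RingHom.id_apply]
    module

lemma X_mem_eigenspace (m : Fin 3) : X m ∈ K1ₗ.eigenspace 2 := by
  rw [Module.End.mem_eigenspace_iff]
  refine (K1_eq_smul_of_mul_eq_smul (commSign · m) (w_mul_X · m)).trans ?_
  fin_cases m <;> norm_num [commSign, Fin.ext_iff]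

lemma X_mul_X_mem_eigenspace {a b : Fin 3} (h : a ≠ b) : X a * X b ∈ K1ₗ.eigenspace 2 := by
  rw [Module.End.mem_eigenspace_iff]
  refine (K1_eq_smul_of_mul_eq_smul (fun l ↦ commSign l a * commSign l b)
    (w_mul_X_mul_X · a b)).trans ?_
  revert h
  fin_cases a <;> fin_cases b <;> norm_num [commSign, Fin.ext_iff]

lemma X_mul_Iem_mul_P (i j k : Fin 3) (ε δ : ℝ) :
    X i * (Iem i j ε * P k δ) =
      (1 / 4 : ℝ) • (X i + ε • X j + δ • (X i * X k) + (ε * δ) • (X j * X k)) := by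
  have hX : ∀ U, X i * (X i * U) = U := fun U ↦ by rw [← mul_assoc, X_mul_self, one_mul]
  simp only [Iem, P, mul_smul_comm, smul_mul_assoc, add_mul, mul_add, one_mul, mul_one,
    mul_assoc, hX]
  module

theorem stmt9_general (i j k : Fin 3) (hj : j = i + 1) (hk : k = i + 2)
    (ε δ : ℝ) :
    K1 (X i * (Iem i j ε * P k δ)) = 2 * (X i * (Iem i j ε * P k δ)) := by
  subst hj hk
  have hU : X i * (Iem i (i + 1) ε * P (i + 2) δ) ∈ K1ₗ.eigenspace 2 := by
    rw [X_mul_Iem_mul_P]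
    refine Submodule.smul_mem _ _ (add_mem (add_mem (add_mem ?_ ?_) ?_) ?_)
    · exact X_mem_eigenspace i
    · exact Submodule.smul_mem _ _ (X_mem_eigenspace (i + 1))
    · exact Submodule.smul_mem _ _ (X_mul_X_mem_eigenspace (by revert i; decide))
    · exact Submodule.smul_mem _ _ (X_mul_X_mem_eigenspace (by revert i; decide))
  rw [two_mul, ← two_smul ℝ]
  exact Module.End.mem_eigenspace_iff.mp hU

/-- For each cyclic permutation `(i,j,k)` and signs `ε, δ`, the element
`X_i I_{ij}^ε P_k^δ` is a proper function of `K+1` with proper value `2`. -/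
theorem stmt9 (i j k : Fin 3) (hj : j = i + 1) (hk : k = i + 2)
    (ε δ : ℝ) (hε : ε = 1 ∨ ε = -1) (hδ : δ = 1 ∨ δ = -1) :
    K1 (X i * (Iem i j ε * P k δ)) = 2 * (X i * (Iem i j ε * P k δ)) :=
  stmt9_general i j k hj hk ε δ
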